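/- Comparison property: if S is a left shelf generated by a single element, then for all a, b ∈ S at least one of a ⊏* b, a = b, b ⊏* a holds. -/

import Mathlib

/-- The sub-shelf of a left shelf generated by `g`: the smallest subset
containing `g` and closed under the operation, as an inductive predicate. -/
inductive ShelfClosure {S : Type*} [Shelf S] (g : S) : S → Prop
  | base : ShelfClosure g g
  | act {a b : S} : ShelfClosure g a → ShelfClosure g b → ShelfClosure g (Shelf.act a b)

/-- The division relation of a left shelf: `a ⊏ b` iff `a ◃ x = b` for some `x`. -/
def ShelfDiv {S : Type*} [Shelf S] (a b : S) : Prop :=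
  ∃ x : S, Shelf.act a x = b

/-!
Dehornoy's syntactic argument. Every element of `S` is the value at `g` of a term in one variable,
so it suffices to compare terms up to LD-equivalence. LD-expansion (rewriting `a(bc)` to
`(ab)(ac)`) is confluent: the full development `∂t`, which distributes every left factor over all
the leaves of its right factor, absorbs one expansion step, so the iterates `∂ⁿt` dominate every
expansion of `t`. Right powers absorb small terms, `t · x^[n] ≡ x^[n+1]` once `t` has at most
`n` leaves, so for large `n` the terms `t₁ · x^[n]` and `t₂ · x^[n]` are LD-equivalent and have a
common expansion `w`. Tracing `t₁` and `t₂` through the expansions makes expansions of both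
iterated left subterms of `w`, and iterated left subterms of one term are linearly ordered.
Evaluating, an iterated left subterm `s` of `s b₁ ⋯ bₖ` gives a chain `s ⊏ s b₁ ⊏ ⋯ ⊏ s b₁ ⋯ bₖ`.
-/

open Relation
open scoped Quandles

inductive LDTerm
  | var : LDTerm
  | op : LDTerm → LDTerm → LDTerm

namespace LDTerm

inductive Expand : LDTerm → LDTerm → Prop
  | root (a b c : LDTerm) : Expand (op a (op b c)) (op (op a b) (op a c))
  | left {a a' : LDTerm} (b : LDTerm) : Expand a a' → Expand (op a b) (op a' b)
  | right (a : LDTerm) {b b' : LDTerm} : Expand b b' → Expand (op a b) (op a b')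

abbrev Expands : LDTerm → LDTerm → Prop := ReflTransGen Expand

theorem Expands.op_left {a a' : LDTerm} (b : LDTerm) (h : Expands a a') :
    Expands (op a b) (op a' b) :=
  h.lift (op · b) fun _ _ ↦ Expand.left b

theorem Expands.op_right (a : LDTerm) {b b' : LDTerm} (h : Expands b b') :
    Expands (op a b) (op a b') :=
  h.lift (op a) fun _ _ ↦ Expand.right a

theorem Expands.op {a a' b b' : LDTerm} (ha : Expands a a') (hb : Expands b b') :
    Expands (op a b) (op a' b') :=
  (ha.op_left b).trans (hb.op_right a')

def distribute (a : LDTerm) : LDTerm → LDTerm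
  | var => op a var
  | op u v => op (distribute a u) (distribute a v)

def develop : LDTerm → LDTerm
  | var => var
  | op u v => distribute (develop u) (develop v)

theorem expands_op_distribute (a b : LDTerm) : Expands (op a b) (distribute a b) := by
  induction b with
  | var => exact .refl
  | op u v ihu ihv => exact .head (.root a u v) (Expands.op ihu ihv)

theorem Expand.distribute_right (a : LDTerm) {b b' : LDTerm} (h : Expand b b') :
    Expand (distribute a b) (distribute a b') := by
  induction h with
  | root u v w => exact .root _ _ _
  | left c _ ih => exact .left _ ih
  | right c _ ih => exact .right _ ih

theorem Expands.distribute_right (a : LDTerm) {b b' : LDTerm} (h : Expands b b') :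
    Expands (distribute a b) (distribute a b') :=
  h.lift (distribute a) fun _ _ ↦ Expand.distribute_right a

theorem Expands.distribute_left {a a' : LDTerm} (h : Expands a a') (b : LDTerm) :
    Expands (distribute a b) (distribute a' b) := by
  induction b with
  | var => exact Expands.op_left var h
  | op u v ihu ihv => exact Expands.op ihu ihv

theorem expands_distribute_distribute (a b c : LDTerm) :
    Expands (distribute a (distribute b c)) (distribute (distribute a b) (distribute a c)) := by
  induction c with
  | var => exact .head (.root _ a var) (Expands.op_left _ (expands_op_distribute _ a))
  | op u v ihu ihv => exact Expands.op ihu ihv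

theorem expands_develop (t : LDTerm) : Expands t (develop t) := by
  induction t with
  | var => exact .refl
  | op u v ihu ihv => exact (Expands.op ihu ihv).trans (expands_op_distribute _ _)

theorem Expand.expands_develop_source {t u : LDTerm} (h : Expand t u) :
    Expands u (develop t) := by
  induction h with
  | root a b c =>
    have hab : Expands (op a b) (distribute (develop a) (develop b)) :=
      (Expands.op (expands_develop a) (expands_develop b)).trans (expands_op_distribute _ _)
    have hac : Expands (op a c) (distribute (develop a) (develop c)) :=
      (Expands.op (expands_develop a) (expands_develop c)).trans (expands_op_distribute _ _)
    exact (Expands.op hab hac).trans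
      (Expands.distribute_right _ (expands_op_distribute _ _))
  | left b _ ih =>
    exact (Expands.op ih (expands_develop b)).trans (expands_op_distribute _ _)
  | right a _ ih =>
    exact (Expands.op (expands_develop a) ih).trans (expands_op_distribute _ _)

theorem Expand.develop_expands {t u : LDTerm} (h : Expand t u) :
    Expands (develop t) (develop u) := by
  induction h with
  | root a b c => exact expands_distribute_distribute _ _ _
  | left b _ ih => exact Expands.distribute_left ih _
  | right a _ ih => exact Expands.distribute_right _ ih

theorem Expands.develop_expands {t u : LDTerm} (h : Expands t u) :
    Expands (develop t) (develop u) :=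
  ReflTransGen.lift' develop (fun _ _ ↦ Expand.develop_expands) _ _ h

theorem expands_develop_iterate_of_le {m n : ℕ} (h : m ≤ n) (t : LDTerm) :
    Expands (develop^[m] t) (develop^[n] t) := by
  induction n, h using Nat.le_induction with
  | base => exact .refl
  | succ n _ ih =>
    rw [Function.iterate_succ_apply']
    exact ih.trans (expands_develop _)

theorem Expands.exists_expands_develop_iterate {t u : LDTerm} (h : Expands t u) :
    ∃ n, Expands u (develop^[n] t) := by
  induction h with
  | refl => exact ⟨0, .refl⟩
  | tail _ hstep ih =>
    obtain ⟨n, hn⟩ := ih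
    refine ⟨n + 1, ?_⟩
    rw [Function.iterate_succ_apply']
    exact hstep.expands_develop_source.trans (Expands.develop_expands hn)

theorem expands_confluent {t u v : LDTerm} (hu : Expands t u) (hv : Expands t v) :
    Join Expands u v := by
  obtain ⟨m, hm⟩ := Expands.exists_expands_develop_iterate hu
  obtain ⟨n, hn⟩ := Expands.exists_expands_develop_iterate hv
  exact ⟨develop^[max m n] t, hm.trans (expands_develop_iterate_of_le (le_max_left m n) t),
    hn.trans (expands_develop_iterate_of_le (le_max_right m n) t)⟩

abbrev LDEquiv : LDTerm → LDTerm → Prop := Join Expands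

local infix:50 " =LD " => LDEquiv

theorem equivalence_ldEquiv : Equivalence LDEquiv :=
  equivalence_join fun _ _ _ ↦ expands_confluent

instance : IsTrans LDTerm LDEquiv := isTrans_join fun _ _ _ ↦ expands_confluent

theorem LDEquiv.op {a a' b b' : LDTerm} (ha : a =LD a') (hb : b =LD b') :
    op a b =LD op a' b' :=
  let ⟨c, hac, ha'c⟩ := ha
  let ⟨d, hbd, hb'd⟩ := hb
  ⟨LDTerm.op c d, Expands.op hac hbd, Expands.op ha'c hb'd⟩

def size : LDTerm → ℕ
  | var => 1
  | op a b => size a + size b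

theorem size_pos (t : LDTerm) : 0 < size t := by
  induction t with
  | var => exact Nat.one_pos
  | op a b ha _ => exact Nat.add_pos_left ha _

/-- `rightPower n` is Dehornoy's `x^[n+1] = x (x (⋯ x))`, with `n + 1` leaves. -/
def rightPower : ℕ → LDTerm
  | 0 => var
  | n + 1 => op var (rightPower n)

theorem size_rightPower (n : ℕ) : size (rightPower n) = n + 1 := by
  induction n with
  | zero => rfl
  | succ n ih => simp only [rightPower, size, ih]; omega

theorem op_rightPower_ldEquiv {t : LDTerm} {n : ℕ} (h : size t ≤ n + 1) :
    op t (rightPower n) =LD rightPower (n + 1) := by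
  induction t generalizing n with
  | var => exact equivalence_ldEquiv.refl _
  | op u v ihu ihv =>
    have hu := size_pos u
    have hv := size_pos v
    simp only [size] at h
    obtain ⟨k, rfl⟩ : ∃ k, n = k + 1 := ⟨n - 1, by omega⟩
    have expand_root : op u (op v (rightPower k)) =LD op (op u v) (op u (rightPower k)) :=
      le_join_of_refl _ _ (.single (.root u v _))
    calc op (op u v) (rightPower (k + 1)) =LD op (op u v) (op u (rightPower k)) :=
          LDEquiv.op (equivalence_ldEquiv.refl _) (equivalence_ldEquiv.symm (ihu (by omega)))
      _ =LD op u (op v (rightPower k)) := equivalence_ldEquiv.symm expand_root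
      _ =LD op u (rightPower (k + 1)) := LDEquiv.op (equivalence_ldEquiv.refl _) (ihv (by omega))
      _ =LD rightPower (k + 2) := ihu (by omega)

inductive IterLeftSubterm : LDTerm → LDTerm → Prop
  | refl (t : LDTerm) : IterLeftSubterm t t
  | extend {s a : LDTerm} (b : LDTerm) : IterLeftSubterm s a → IterLeftSubterm s (op a b)

theorem IterLeftSubterm.total {p q t : LDTerm} (hp : IterLeftSubterm p t)
    (hq : IterLeftSubterm q t) : IterLeftSubterm p q ∨ IterLeftSubterm q p := by
  induction hp with
  | refl => exact .inr hq
  | extend b hp ih =>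
    cases hq with
    | refl => exact .inl (.extend b hp)
    | extend _ hq => exact ih hq

theorem Expand.exists_iterLeftSubterm {t t' s : LDTerm} (h : Expand t t')
    (hs : IterLeftSubterm s t) : ∃ s', Expands s s' ∧ IterLeftSubterm s' t' := by
  induction h generalizing s with
  | root a b c =>
    cases hs with
    | refl => exact ⟨_, .single (.root a b c), .refl _⟩
    | extend _ hs =>
      cases hs with
      | refl => exact ⟨a, .refl, .extend _ (.extend _ (.refl a))⟩
      | extend _ hs => exact ⟨s, .refl, .extend _ (.extend _ (.extend _ hs))⟩
  | left b h ih =>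
    cases hs with
    | refl => exact ⟨_, .single (.left b h), .refl _⟩
    | extend _ hs =>
      obtain ⟨s', hss', hs'⟩ := ih hs
      exact ⟨s', hss', .extend _ hs'⟩
  | right a h =>
    cases hs with
    | refl => exact ⟨_, .single (.right a h), .refl _⟩
    | extend _ hs => exact ⟨s, .refl, .extend _ hs⟩

theorem Expands.exists_iterLeftSubterm {t t' s : LDTerm} (h : Expands t t')
    (hs : IterLeftSubterm s t) : ∃ s', Expands s s' ∧ IterLeftSubterm s' t' := by
  induction h with
  | refl => exact ⟨s, .refl, hs⟩
  | tail _ hstep ih =>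
    obtain ⟨s₁, hs₁, hil₁⟩ := ih
    obtain ⟨s₂, hs₂, hil₂⟩ := hstep.exists_iterLeftSubterm hil₁
    exact ⟨s₂, hs₁.trans hs₂, hil₂⟩

theorem exists_expands_iterLeftSubterm_total (t₁ t₂ : LDTerm) :
    ∃ t₁' t₂', Expands t₁ t₁' ∧ Expands t₂ t₂' ∧
      (IterLeftSubterm t₁' t₂' ∨ IterLeftSubterm t₂' t₁') := by
  have h₁ : op t₁ (rightPower (size t₁ + size t₂)) =LD rightPower (size t₁ + size t₂ + 1) :=
    op_rightPower_ldEquiv (by omega)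
  have h₂ : op t₂ (rightPower (size t₁ + size t₂)) =LD rightPower (size t₁ + size t₂ + 1) :=
    op_rightPower_ldEquiv (by omega)
  obtain ⟨w, hw₁, hw₂⟩ := equivalence_ldEquiv.trans h₁ (equivalence_ldEquiv.symm h₂)
  obtain ⟨t₁', ht₁, hs₁⟩ := Expands.exists_iterLeftSubterm hw₁ (.extend _ (.refl t₁))
  obtain ⟨t₂', ht₂, hs₂⟩ := Expands.exists_iterLeftSubterm hw₂ (.extend _ (.refl t₂))
  exact ⟨t₁', t₂', ht₁, ht₂, hs₁.total hs₂⟩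

section Eval

variable {S : Type*} [Shelf S] (g : S)

def eval : LDTerm → S
  | var => g
  | op a b => eval a ◃ eval b

theorem Expand.eval_eq {t u : LDTerm} (h : Expand t u) : eval g t = eval g u := by
  induction h with
  | root a b c => exact Shelf.self_distrib
  | left b _ ih => rw [eval, eval, ih]
  | right a _ ih => rw [eval, eval, ih]

theorem Expands.eval_eq {t u : LDTerm} (h : Expands t u) : eval g t = eval g u := by
  induction h with
  | refl => rfl
  | tail _ hstep ih => exact ih.trans (hstep.eval_eq g)

theorem IterLeftSubterm.reflTransGen_shelfDiv_eval {s t : LDTerm} (h : IterLeftSubterm s t) :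
    ReflTransGen ShelfDiv (eval g s) (eval g t) := by
  induction h with
  | refl => exact .refl
  | extend b _ ih => exact ih.tail ⟨eval g b, rfl⟩

end Eval

end LDTerm

theorem ShelfClosure.exists_eval_eq {S : Type*} [Shelf S] {g a : S} (h : ShelfClosure g a) :
    ∃ t : LDTerm, t.eval g = a := by
  induction h with
  | base => exact ⟨.var, rfl⟩
  | act _ _ iha ihb =>
    obtain ⟨t, rfl⟩ := iha
    obtain ⟨u, rfl⟩ := ihb
    exact ⟨.op t u, rfl⟩

theorem shelf_comparison {S : Type*} [Shelf S] (g : S)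
    (hgen : ∀ a : S, ShelfClosure g a) (a b : S) :
    Relation.TransGen ShelfDiv a b ∨ a = b ∨ Relation.TransGen ShelfDiv b a := by
  obtain ⟨t₁, rfl⟩ := (hgen a).exists_eval_eq
  obtain ⟨t₂, rfl⟩ := (hgen b).exists_eval_eq
  obtain ⟨t₁', t₂', h₁, h₂, hle⟩ := LDTerm.exists_expands_iterLeftSubterm_total t₁ t₂
  rw [LDTerm.Expands.eval_eq g h₁, LDTerm.Expands.eval_eq g h₂]
  rcases hle with hle | hle <;>
    rcases reflTransGen_iff_eq_or_transGen.mp (hle.reflTransGen_shelfDiv_eval g) with heq | hdiv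
  · exact .inr (.inl heq.symm)
  · exact .inl hdiv
  · exact .inr (.inl heq)
  · exact .inr (.inr hdiv)
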